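/- For every p > 0, G(1/(3p), p, p) > 2π/3 − 8p/3. (The two sides have the same limit 2π/3 as p → 0⁺; the right-hand side is the limit of G(t, p, p) as t → +∞.) -/

import Mathlib

open Real

/-- `S₀(t) = 8t³/(1+t²)³`, the spherical candle function in the variable `t = tan(ℓ/2)`. -/
noncomputable def sphS0 (t : ℝ) : ℝ := 8 * t ^ 3 / (1 + t ^ 2) ^ 3

/-- `S₋₁(t) = 4t⁴(3+t²)/(3(1+t²)³)`. -/
noncomputable def sphSm1 (t : ℝ) : ℝ := 4 * t ^ 4 * (3 + t ^ 2) / (3 * (1 + t ^ 2) ^ 3)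

/-- `S₋₂(t) = (4/3)·arctan t − (4/3)·t/(1+t²) − (8/9)·t³/(1+t²)³`. -/
noncomputable def sphSm2 (t : ℝ) : ℝ :=
  (4 / 3) * arctan t - (4 / 3) * t / (1 + t ^ 2) - (8 / 9) * t ^ 3 / (1 + t ^ 2) ^ 3

/-- `G(t, p, q) = (8/3)·arctan t − pq·S₀(t) − (p+q)·S₋₁(t) − S₋₂(t)`. -/
noncomputable def sphGt (t p q : ℝ) : ℝ :=
  (8 / 3) * arctan t - p * q * sphS0 t - (p + q) * sphSm1 t - sphSm2 t

/-! At `t = 1/(3p)` the rational terms of `G(t, p, p)` collapse and, with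
`arctan (1/x) = π/2 - arctan x`, the claim becomes the one-variable bound
`arctan x < 2x/3 + x/(3(1+x²))` at `x = 3p`. The difference of the two sides vanishes at `0`
and has derivative `2x⁴/(3(1+x²)²) > 0`. -/

lemma hasDerivAt_two_mul_div_three_add_sub_arctan (x : ℝ) :
    HasDerivAt (fun t => 2 * t / 3 + t / (3 * (1 + t ^ 2)) - arctan t)
      (2 * x ^ 4 / (3 * (1 + x ^ 2) ^ 2)) x := by
  have hden : HasDerivAt (fun t : ℝ => 3 * (1 + t ^ 2)) (3 * (2 * x)) x := by
    simpa using ((hasDerivAt_pow 2 x).const_add 1).const_mul 3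
  have hquot := (hasDerivAt_id x).div hden (by positivity)
  have hlin := ((hasDerivAt_id x).const_mul 2).div_const 3
  refine ((hlin.add hquot).sub (hasDerivAt_arctan x)).congr_deriv ?_
  have : 1 + x ^ 2 ≠ 0 := by positivity
  simp only [id]
  field_simp
  ring

lemma arctan_lt_two_mul_div_three_add (x : ℝ) (hx : 0 < x) :
    arctan x < 2 * x / 3 + x / (3 * (1 + x ^ 2)) := by
  have hmono : StrictMonoOn (fun t => 2 * t / 3 + t / (3 * (1 + t ^ 2)) - arctan t)
      (Set.Ici 0) := by
    refine strictMonoOn_of_deriv_pos (convex_Ici 0) (fun y _ =>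
      (hasDerivAt_two_mul_div_three_add_sub_arctan y).continuousAt.continuousWithinAt) ?_
    intro y hy
    rw [interior_Ici, Set.mem_Ioi] at hy
    rw [(hasDerivAt_two_mul_div_three_add_sub_arctan y).deriv]
    positivity
  have := hmono Set.self_mem_Ici (Set.mem_Ici.mpr hx.le) hx
  simp only [mul_zero, zero_div, zero_add, arctan_zero, sub_zero] at this
  linarith

lemma sphGt_inv_three_mul_self (p : ℝ) (hp : 0 < p) :
    sphGt (1 / (3 * p)) p p = 2 * π / 3 - 4 / 3 * (arctan (3 * p) - p / (1 + 9 * p ^ 2)) := by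
  have harctan : arctan (1 / (3 * p)) = π / 2 - arctan (3 * p) := by
    rw [one_div]
    exact arctan_inv_of_pos (by positivity)
  unfold sphGt sphS0 sphSm1 sphSm2
  rw [harctan]
  have : 1 + 9 * p ^ 2 ≠ 0 := by positivity
  field_simp
  ring

/-- `G(1/(3p), p, p) > 2π/3 − 8p/3` for all `p > 0`. -/
theorem sphGt_diag_gt (p : ℝ) (hp : 0 < p) :
    2 * π / 3 - 8 * p / 3 < sphGt (1 / (3 * p)) p p := by
  have hbound := arctan_lt_two_mul_div_three_add (3 * p) (by positivity)
  have hrational :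
      2 * (3 * p) / 3 + 3 * p / (3 * (1 + (3 * p) ^ 2)) = 2 * p + p / (1 + 9 * p ^ 2) := by
    field_simp
    ring
  rw [sphGt_inv_three_mul_self p hp]
  linarith
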